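/- Linear independence satisfies Transitivity: if A ⫝_B C and A ⫝_C D in a K-vector space V with B ⊆ C, then A ⫝_B D. -/

import Mathlib

/-- The linear independence relation: `A` is independent from `B` over `C` in the
`K`-vector space `V`. -/
def Indep (K : Type*) {V : Type*} [Field K] [AddCommGroup V] [Module K V]
    (A C B : Set V) : Prop :=
  Submodule.span K (A ∪ C) ⊓ Submodule.span K (B ∪ C) = Submodule.span K C

open Submodule

theorem indep_iff_le {K V : Type*} [Field K] [AddCommGroup V] [Module K V] {A B C : Set V} :
    Indep K A C B ↔ span K (A ∪ C) ⊓ span K (B ∪ C) ≤ span K C :=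
  ⟨le_of_eq, fun h ↦ h.antisymm <|
    le_inf (span_mono Set.subset_union_right) (span_mono Set.subset_union_right)⟩

theorem indep_transitivity {K V : Type*} [Field K] [AddCommGroup V] [Module K V]
    (A B C D : Set V) (h₁ : Indep K A B C) (h₂ : Indep K A C D) (hBC : B ⊆ C) :
    Indep K A B D := by
  have hC : span K (A ∪ B) ⊓ span K (D ∪ B) ≤ span K C := h₂ ▸
    inf_le_inf (span_mono (Set.union_subset_union_right A hBC))
      (span_mono (Set.union_subset_union_right D hBC))
  rw [indep_iff_le]
  calc span K (A ∪ B) ⊓ span K (D ∪ B)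
      ≤ span K (A ∪ B) ⊓ span K C := le_inf inf_le_left hC
    _ ≤ span K (A ∪ B) ⊓ span K (C ∪ B) := inf_le_inf_left _ (span_mono Set.subset_union_left)
    _ = span K B := h₁
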